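/- Let (ℱ, 𝒮) be a digraph-source sequence of size ℓ and let ℬ be a family of subsets of ⋃_i V(G_i). Then the maximum size of a set of T-paths with respect to (ℱ, 𝒮) and ℬ equals the minimum order of a T-cut, i.e., equals min over ℬ′ ⊆ ℬ of (|ℬ \ ℬ′| + f^D(ℱ, 𝒮, ⋃ℬ′)), where f^D(ℱ, 𝒮, B) is the minimum order of a D-cut with respect to (ℱ, 𝒮) and B. -/

import Mathlib

/-!
All sets of T-paths live in one auxiliary digraph `tGraph`: a copy of each `G i`, one common copy
of `V` entered from every copy of a vertex, and one vertex per bag `b ∈ ℬ`, entered from the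
vertices of `b`. Disjoint paths from the sources to the bag vertices are exactly the sets of
T-paths: the common copy of `V` makes the last vertices distinct and the bag vertices make them a
partial transversal of `ℬ`. Dually, a vertex separator of `tGraph` splits into the bags it deletes,
the last vertices `X₀` it deletes and separators `X i` of the copies, that is, into a T-cut of the
same order. Menger's theorem for `tGraph`, proved by induction on the number of edges, then gives
the min-max equality.
-/

/-- A (directed) path given as a nonempty list of pairwise-distinct vertices
with consecutive pairs being edges of the digraph `G`. -/
def IsPathList {V : Type*} (G : V → V → Prop) (p : List V) : Prop :=
  p ≠ [] ∧ p.Nodup ∧ p.Chain' G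

/-- The first vertex of the list `p` belongs to `A`. -/
def FirstIn {V : Type*} (p : List V) (A : Set V) : Prop := ∃ a ∈ A, p.head? = some a

/-- The last vertex of the list `p` belongs to `A`. -/
def LastIn {V : Type*} (p : List V) (A : Set V) : Prop := ∃ a ∈ A, p.getLast? = some a

/-- `X` is an `(A,B)`-separator in `G`: every path of `G` starting in `A` and
ending in `B` meets `X`. -/
def IsSeparator {V : Type*} (G : V → V → Prop) (A B X : Set V) : Prop :=
  ∀ p : List V, IsPathList G p → FirstIn p A → LastIn p B → ∃ v ∈ p, v ∈ X

/-- Two lists of vertices share no vertex. -/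
def ListsDisjoint {V : Type*} (p q : List V) : Prop := ∀ v, v ∈ p → v ∉ q

/-- An `(ℱ,𝒮)`-respecting system of paths, encoded as a finite set of pairs
`(i, p)` where `p` is a path of `G i` starting in `S i`, and paths assigned to
the same index (i.e. in the same part of the defining partition) are pairwise
vertex-disjoint. -/
def RespectingSys {V : Type*} {ℓ : ℕ} (G : Fin ℓ → V → V → Prop) (S : Fin ℓ → Set V)
    (P : Finset (Fin ℓ × List V)) : Prop :=
  (∀ q ∈ P, IsPathList (G q.1) q.2 ∧ FirstIn q.2 (S q.1)) ∧
  (∀ q ∈ P, ∀ q' ∈ P, q ≠ q' → q.1 = q'.1 → ListsDisjoint q.2 q'.2)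

/-- A set of D-paths w.r.t. `(ℱ,𝒮)` and `B` : a respecting system whose paths
have pairwise distinct last vertices, all lying in `B`. -/
def DPathSys {V : Type*} {ℓ : ℕ} (G : Fin ℓ → V → V → Prop) (S : Fin ℓ → Set V)
    (B : Set V) (P : Finset (Fin ℓ × List V)) : Prop :=
  RespectingSys G S P ∧ (∀ q ∈ P, LastIn q.2 B) ∧
  (∀ q ∈ P, ∀ q' ∈ P, q ≠ q' → q.2.getLast? ≠ q'.2.getLast?)

/-- A set of T-paths w.r.t. `(ℱ,𝒮)` and the family `ℬ` : a respecting system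
with pairwise distinct last vertices forming a partial transversal of `ℬ`
(witnessed by an injective assignment of bags). -/
def TPathSys {V : Type*} {ℓ : ℕ} (G : Fin ℓ → V → V → Prop) (S : Fin ℓ → Set V)
    (ℬ : Finset (Finset V)) (P : Finset (Fin ℓ × List V)) : Prop :=
  RespectingSys G S P ∧
  (∀ q ∈ P, ∀ q' ∈ P, q ≠ q' → q.2.getLast? ≠ q'.2.getLast?) ∧
  ∃ φ : Fin ℓ × List V → Finset V, Set.InjOn φ ↑P ∧
    ∀ q ∈ P, φ q ∈ ℬ ∧ ∃ v, q.2.getLast? = some v ∧ v ∈ φ q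

section Paths

variable {W : Type*} {R : W → W → Prop} {A B X : Set W} {p q : List W}

theorem IsPathList.mono {R' : W → W → Prop} (h : ∀ ⦃a b⦄, R a b → R' a b)
    (hp : IsPathList R p) : IsPathList R' p :=
  ⟨hp.1, hp.2.1, List.IsChain.imp h hp.2.2⟩

theorem IsPathList.of_isSuffix (hp : IsPathList R p) (hqp : q <:+ p) (hq : q ≠ []) :
    IsPathList R q :=
  ⟨hq, hp.2.1.sublist hqp.sublist, List.IsChain.suffix hp.2.2 hqp⟩

theorem IsPathList.reverse (hp : IsPathList R p) : IsPathList (flip R) p.reverse :=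
  ⟨by simpa using hp.1, List.nodup_reverse.2 hp.2.1, List.isChain_reverse.2 hp.2.2⟩

theorem IsPathList.append (hp : IsPathList R p) (hq : q.Nodup) (hqc : q.IsChain R)
    (hpq : ∀ a ∈ p.getLast?, ∀ b ∈ q.head?, R a b) (hd : ListsDisjoint p q) :
    IsPathList R (p ++ q) :=
  ⟨by simp [hp.1], hp.2.1.append hq fun a hap haq => hd a hap haq,
    List.isChain_append.2 ⟨hp.2.2, hqc, hpq⟩⟩

theorem FirstIn.of_head?_eq (hp : FirstIn p A) (h : q.head? = p.head?) : FirstIn q A := by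
  rwa [FirstIn, h]

theorem LastIn.of_getLast?_eq (hp : LastIn p A) (h : q.getLast? = p.getLast?) : LastIn q A := by
  rwa [LastIn, h]

theorem FirstIn.reverse (h : FirstIn p A) : LastIn p.reverse A := by
  simpa [FirstIn, LastIn] using h

theorem LastIn.reverse (h : LastIn p A) : FirstIn p.reverse A := by
  simpa [FirstIn, LastIn] using h

theorem List.IsChain.exists_isPathList_subset (hc : p.IsChain R) (hne : p ≠ []) :
    ∃ q, IsPathList R q ∧ q.head? = p.head? ∧ q.getLast? = p.getLast? ∧ q ⊆ p := by
  induction p with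
  | nil => exact absurd rfl hne
  | cons a t ih =>
    rcases eq_or_ne t [] with rfl | ht
    · exact ⟨[a], ⟨by simp, by simp, List.isChain_singleton a⟩, rfl, rfl, List.Subset.refl _⟩
    obtain ⟨q, hq, hqh, hql, hqt⟩ := ih (List.isChain_cons.1 hc).2 ht
    by_cases ha : a ∈ q
    · obtain ⟨r₁, r₂, rfl⟩ := List.append_of_mem ha
      refine ⟨a :: r₂, hq.of_isSuffix (List.suffix_append _ _) (by simp), rfl, ?_, ?_⟩
      · rw [List.getLast?_cons_of_ne_nil ht, ← hql, List.getLast?_append_cons]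
      · exact List.cons_subset.2 ⟨List.mem_cons_self, fun v hv =>
          List.mem_cons_of_mem _ (hqt (by simp [hv]))⟩
    · refine ⟨a :: q, ⟨by simp, List.nodup_cons.2 ⟨ha, hq.2.1⟩, ?_⟩, rfl, ?_,
        List.cons_subset_cons _ hqt⟩
      · exact List.isChain_cons.2 ⟨fun b hb => (List.isChain_cons.1 hc).1 b (hqh ▸ hb), hq.2.2⟩
      · rw [List.getLast?_cons_of_ne_nil ht, List.getLast?_cons_of_ne_nil hq.1, hql]

theorem exists_isPathList_join {a b : W} (hp : IsPathList R p) (hq : IsPathList R q)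
    (hpa : p.getLast? = some a) (hqb : q.head? = some b) (hab : a = b ∨ R a b)
    (hd : ∀ u ∈ p, u ∈ q → u = a ∧ a = b) :
    ∃ r, IsPathList R r ∧ r.head? = p.head? ∧ r.getLast? = q.getLast? ∧ r ⊆ p ++ q := by
  by_cases hab' : a = b
  · subst hab'
    obtain ⟨t, rfl⟩ := List.head?_eq_some_iff.1 hqb
    obtain ⟨hat, ht⟩ := List.nodup_cons.1 hq.2.1
    obtain ⟨hat', htc⟩ := List.isChain_cons.1 hq.2.2
    refine ⟨p ++ t, hp.append ht htc (by simpa [hpa] using hat')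
      fun u hup hut => hat ((hd u hup (List.mem_cons_of_mem a hut)).1 ▸ hut),
      List.head?_append_of_ne_nil p hp.1, ?_, ?_⟩
    · cases t with
      | nil => simpa using hpa
      | cons c t =>
        rw [List.getLast?_append_of_ne_nil _ (List.cons_ne_nil c t), List.getLast?_cons_cons]
    · exact fun u => by simp only [List.mem_append, List.mem_cons]; tauto
  · refine ⟨p ++ q, hp.append hq.2.1 hq.2.2 ?_ fun u hup huq => hab' (hd u hup huq).2,
      List.head?_append_of_ne_nil p hp.1, List.getLast?_append_of_ne_nil p hq.1,
      List.Subset.refl _⟩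
    simpa [hpa, hqb] using hab.resolve_left hab'

theorem isSeparator_univ : IsSeparator R A B Set.univ := fun p hp _ _ => by
  obtain ⟨v, hv⟩ := List.exists_mem_of_ne_nil p hp.1
  exact ⟨v, hv, trivial⟩

theorem IsSeparator.exists_mem_of_isChain (hX : IsSeparator R A B X) (hc : p.IsChain R)
    (hne : p ≠ []) (hA : FirstIn p A) (hB : LastIn p B) : ∃ v ∈ p, v ∈ X := by
  obtain ⟨q, hq, hqh, hql, hqp⟩ := hc.exists_isPathList_subset hne
  obtain ⟨v, hv, hvX⟩ := hX q hq (hA.of_head?_eq hqh) (hB.of_getLast?_eq hql)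
  exact ⟨v, hqp hv, hvX⟩

theorem IsSeparator.flip (hX : IsSeparator R A B X) : IsSeparator (flip R) B A X := by
  intro p hp hB hA
  obtain ⟨v, hv, hvX⟩ := hX p.reverse hp.reverse hA.reverse hB.reverse
  exact ⟨v, List.mem_reverse.1 hv, hvX⟩

/-- A common vertex outside `X` would give an `A`–`B` walk avoiding `X`: along `p` up to that
vertex, then along `q`. -/
theorem IsSeparator.mem_of_mem_of_mem (hX : IsSeparator R A B X)
    (hp : IsPathList R p) (hpA : FirstIn p A) (hpX : ∀ u ∈ p, u ∈ X → p.getLast? = some u)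
    (hq : IsPathList R q) (hqB : LastIn q B) (hqX : ∀ u ∈ q, u ∈ X → q.head? = some u)
    {v : W} (hvp : v ∈ p) (hvq : v ∈ q) : v ∈ X := by
  by_contra hv
  obtain ⟨p₁, p₂, rfl⟩ := List.append_of_mem hvp
  obtain ⟨q₁, q₂, rfl⟩ := List.append_of_mem hvq
  have hc : (p₁ ++ v :: q₂).IsChain R := by
    have hpc := List.isChain_append.1 hp.2.2
    refine List.isChain_append.2 ⟨hpc.1, List.IsChain.suffix hq.2.2 ⟨q₁, rfl⟩, ?_⟩
    simpa using hpc.2.2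
  obtain ⟨u, hu, huX⟩ := hX.exists_mem_of_isChain hc (by simp)
    (hpA.of_head?_eq (by simp [List.head?_append]))
    (hqB.of_getLast?_eq (by rw [List.getLast?_append_cons, List.getLast?_append_cons]))
  rcases List.mem_append.1 hu with hu | hu
  · have hl := hpX u (by simp [hu]) huX
    rw [List.getLast?_append_cons] at hl
    exact (List.nodup_append.1 hp.2.1).2.2 u hu u (List.mem_of_getLast? hl) rfl
  · rcases List.mem_cons.1 hu with rfl | hu
    · exact hv huX
    · have hh := hqX u (by simp [hu]) huX
      have hnd := hq.2.1
      cases q₁ <;> simp_all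

theorem eq_of_pairwise_listsDisjoint {P : Set (List W)} (hd : P.Pairwise ListsDisjoint)
    (hp : p ∈ P) (hq : q ∈ P) {v : W} (hvp : v ∈ p) (hvq : v ∈ q) : p = q :=
  by_contra fun h => hd hp hq h v hvp hvq

end Paths

section DisjointPaths

variable {W : Type*} {R : W → W → Prop} {A B X Z : Set W} {P : Finset (List W)}

def IsDisjointPathFamily (R : W → W → Prop) (A B : Set W) (P : Finset (List W)) : Prop :=
  (∀ p ∈ P, IsPathList R p ∧ FirstIn p A ∧ LastIn p B) ∧ (P : Set (List W)).Pairwise ListsDisjoint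

theorem IsDisjointPathFamily.mono {R' : W → W → Prop} (h : ∀ ⦃a b⦄, R a b → R' a b)
    (hP : IsDisjointPathFamily R A B P) : IsDisjointPathFamily R' A B P :=
  ⟨fun p hp => ⟨(hP.1 p hp).1.mono h, (hP.1 p hp).2⟩, hP.2⟩

theorem exists_isDisjointPathFamily_image {ι : Type*} {I : Finset ι} {f : ι → List W}
    (hf : ∀ i ∈ I, IsPathList R (f i) ∧ FirstIn (f i) A ∧ LastIn (f i) B)
    (hd : (I : Set ι).Pairwise fun i j => ListsDisjoint (f i) (f j)) :
    ∃ P, IsDisjointPathFamily R A B P ∧ P.card = I.card := by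
  classical
  have hinj : Set.InjOn f I := fun i hi j hj h => by_contra fun hne => by
    obtain ⟨u, hu⟩ := List.exists_mem_of_ne_nil _ (hf i hi).1.1
    exact hd hi hj hne u hu (h ▸ hu)
  refine ⟨I.image f, ⟨Finset.forall_mem_image.2 hf, ?_⟩, Finset.card_image_of_injOn hinj⟩
  rw [Finset.coe_image, hinj.pairwise_image]
  exact hd

theorem IsDisjointPathFamily.card_le_ncard [Finite W] (hP : IsDisjointPathFamily R A B P)
    (hX : IsSeparator R A B X) : P.card ≤ X.ncard := by
  classical
  have hXf := Set.toFinite X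
  calc P.card ≤ (P.biUnion fun p => p.toFinset ∩ hXf.toFinset).card := by
        refine Finset.card_le_card_biUnion (fun p hp q hq hpq => ?_) fun p hp => ?_
        · refine Finset.disjoint_left.2 fun v hvp hvq => ?_
          simp only [Finset.mem_inter, List.mem_toFinset] at hvp hvq
          exact hP.2 hp hq hpq v hvp.1 hvq.1
        · obtain ⟨v, hv, hvX⟩ := hX p (hP.1 p hp).1 (hP.1 p hp).2.1 (hP.1 p hp).2.2
          exact ⟨v, by simpa using ⟨hv, hvX⟩⟩
    _ ≤ hXf.toFinset.card :=
        Finset.card_le_card (Finset.biUnion_subset.2 fun _ _ => Finset.inter_subset_right)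
    _ = X.ncard := (Set.ncard_eq_toFinset_card X hXf).symm

section Endpoints

variable [Finite W] {T : Set W} (e : List W → Option W)

theorem exists_eq_some_of_ncard_le (hd : (P : Set (List W)).Pairwise ListsDisjoint)
    (hT : T.ncard ≤ P.card) (he : ∀ p ∈ P, ∃ v ∈ T, v ∈ p ∧ e p = some v) :
    ∀ t ∈ T, ∃ p ∈ P, e p = some t := by
  have hinj : Set.InjOn e P := fun p hp q hq h => by
    obtain ⟨v, -, hvp, hv⟩ := he p hp
    obtain ⟨w, -, hwq, hw⟩ := he q hq
    rw [hv, hw, Option.some_inj] at h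
    exact eq_of_pairwise_listsDisjoint hd hp hq hvp (h ▸ hwq)
  have himage : e '' P = some '' T := by
    refine Set.eq_of_subset_of_ncard_le ?_ ?_
    · rintro _ ⟨p, hp, rfl⟩
      obtain ⟨v, hvT, -, hv⟩ := he p hp
      exact ⟨v, hvT, hv.symm⟩
    · rwa [Set.ncard_image_of_injective _ (Option.some_injective _), hinj.ncard_image,
        Set.ncard_coe_finset]
  intro t ht
  obtain ⟨p, hp, hpt⟩ : some t ∈ e '' P := himage ▸ Set.mem_image_of_mem some ht
  exact ⟨p, hp, hpt⟩

theorem eq_some_of_mem_of_ncard_le (hd : (P : Set (List W)).Pairwise ListsDisjoint)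
    (hT : T.ncard ≤ P.card) (he : ∀ p ∈ P, ∃ v ∈ T, v ∈ p ∧ e p = some v) :
    ∀ p ∈ P, ∀ v ∈ p, v ∈ T → e p = some v := by
  intro p hp v hvp hvT
  obtain ⟨q, hq, hqv⟩ := exists_eq_some_of_ncard_le e hd hT he v hvT
  obtain ⟨w, -, hwq, hw⟩ := he q hq
  obtain rfl : w = v := Option.some_inj.1 (hw.symm.trans hqv)
  rwa [eq_of_pairwise_listsDisjoint hd hp hq hvp hwq]

end Endpoints

section Tight

variable [Finite W]

theorem IsDisjointPathFamily.getLast?_eq_of_mem (hP : IsDisjointPathFamily R A B P)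
    (hB : B.ncard ≤ P.card) : ∀ p ∈ P, ∀ v ∈ p, v ∈ B → p.getLast? = some v :=
  eq_some_of_mem_of_ncard_le List.getLast? hP.2 hB fun p hp => by
    obtain ⟨v, hv, hl⟩ := (hP.1 p hp).2.2
    exact ⟨v, hv, List.mem_of_getLast? hl, hl⟩

theorem IsDisjointPathFamily.head?_eq_of_mem (hP : IsDisjointPathFamily R A B P)
    (hA : A.ncard ≤ P.card) : ∀ p ∈ P, ∀ v ∈ p, v ∈ A → p.head? = some v :=
  eq_some_of_mem_of_ncard_le List.head? hP.2 hA fun p hp => by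
    obtain ⟨v, hv, hh⟩ := (hP.1 p hp).2.1
    exact ⟨v, hv, List.mem_of_mem_head? hh, hh⟩

theorem IsDisjointPathFamily.exists_head?_eq (hP : IsDisjointPathFamily R A B P)
    (hA : A.ncard ≤ P.card) : ∀ a ∈ A, ∃ p ∈ P, p.head? = some a :=
  exists_eq_some_of_ncard_le List.head? hP.2 hA fun p hp => by
    obtain ⟨v, hv, hh⟩ := (hP.1 p hp).2.1
    exact ⟨v, hv, List.mem_of_mem_head? hh, hh⟩

end Tight

theorem isSeparator_inter_of_forall_eq (hR : ∀ ⦃a b⦄, R a b → a = b) :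
    IsSeparator R A B (A ∩ B) := by
  rintro (_ | ⟨a, _ | ⟨b, t⟩⟩) ⟨hne, hnd, hc⟩ ⟨a', ha', hh⟩ ⟨b', hb', hl⟩
  · exact absurd rfl hne
  · simp only [List.head?_cons, List.getLast?_singleton, Option.some_inj] at hh hl
    exact ⟨a, List.mem_singleton_self a, hh ▸ ha', hl ▸ hb'⟩
  · obtain rfl := hR (List.isChain_cons_cons.1 hc).1
    simp at hnd

theorem exists_isDisjointPathFamily_of_forall_eq [Finite W] {k : ℕ}
    (hR : ∀ ⦃a b⦄, R a b → a = b) (hk : ∀ X, IsSeparator R A B X → k ≤ X.ncard) :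
    ∃ P, IsDisjointPathFamily R A B P ∧ P.card = k := by
  have hfin := Set.toFinite (A ∩ B)
  obtain ⟨t, hts, rfl⟩ := Finset.exists_subset_card_eq
    ((hk _ (isSeparator_inter_of_forall_eq hR)).trans (Set.ncard_eq_toFinset_card _ hfin).le)
  refine exists_isDisjointPathFamily_image (f := fun v => [v]) (fun v hv => ?_)
    fun v _ w _ hvw u hu hu' => ?_
  · obtain ⟨hvA, hvB⟩ := hfin.mem_toFinset.1 (hts hv)
    exact ⟨⟨by simp, by simp, List.isChain_singleton v⟩, ⟨v, hvA, rfl⟩, ⟨v, hvB, rfl⟩⟩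
  · rw [List.mem_singleton] at hu hu'
    exact hvw (hu.symm.trans hu')

def deleteEdge (R : W → W → Prop) (x y : W) : W → W → Prop :=
  fun u v => R u v ∧ ¬(u = x ∧ v = y)

section DeleteEdge

variable {x y z : W} {p : List W}

theorem flip_deleteEdge : flip (deleteEdge R x y) = deleteEdge (flip R) y x := by
  funext u v
  simp only [flip, deleteEdge, and_comm (a := v = x)]

theorem isChain_deleteEdge_or (x y : W) (hc : p.IsChain R) :
    p.IsChain (deleteEdge R x y) ∨ ∃ p₁ p₂, p = p₁ ++ x :: y :: p₂ := by
  induction p with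
  | nil => exact Or.inl List.IsChain.nil
  | cons a t ih =>
    rcases ih (List.isChain_cons.1 hc).2 with h | ⟨p₁, p₂, rfl⟩
    · cases t with
      | nil => exact Or.inl (List.isChain_singleton a)
      | cons b t =>
        by_cases hab : a = x ∧ b = y
        · exact Or.inr ⟨[], t, by rw [hab.1, hab.2]; rfl⟩
        · exact Or.inl (List.isChain_cons_cons.2 ⟨⟨(List.isChain_cons_cons.1 hc).1, hab⟩, h⟩)
    · exact Or.inr ⟨a :: p₁, p₂, rfl⟩

theorem isChain_deleteEdge_append_singleton {l : List W} (hx : x ∉ l)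
    (hc : (l ++ [x]).IsChain R) : (l ++ [x]).IsChain (deleteEdge R x y) := by
  induction l with
  | nil => exact List.isChain_singleton x
  | cons a t ih =>
    rw [List.cons_append, List.isChain_cons] at hc ⊢
    exact ⟨fun b hb => ⟨hc.1 b hb, fun h => hx (h.1 ▸ List.mem_cons_self)⟩,
      ih (fun h => hx (List.mem_cons_of_mem a h)) hc.2⟩

theorem IsSeparator.insert_of_deleteEdge (hX : IsSeparator (deleteEdge R x y) A B X)
    (hz : z = x ∨ z = y) : IsSeparator R A B (insert z X) := by
  intro p hp hA hB
  rcases isChain_deleteEdge_or x y hp.2.2 with hc | ⟨p₁, p₂, rfl⟩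
  · obtain ⟨v, hv, hvX⟩ := hX p ⟨hp.1, hp.2.1, hc⟩ hA hB
    exact ⟨v, hv, Set.mem_insert_of_mem z hvX⟩
  · exact ⟨z, by rcases hz with rfl | rfl <;> simp, Set.mem_insert z X⟩

/-- An `A`–`B` path of `R` has an initial piece avoiding the edge `xy` and ending in
`insert x X`: up to `x` if it uses `xy`, up to a vertex of `X` otherwise. -/
theorem IsSeparator.of_deleteEdge_left (hX : IsSeparator (deleteEdge R x y) A B X)
    (hZ : IsSeparator (deleteEdge R x y) A (insert x X) Z) : IsSeparator R A B Z := by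
  intro p hp hA hB
  obtain ⟨v, p₁, p₂, rfl, hv, hc⟩ : ∃ v p₁ p₂, p = p₁ ++ v :: p₂ ∧ v ∈ insert x X ∧
      (p₁ ++ [v]).IsChain (deleteEdge R x y) := by
    rcases isChain_deleteEdge_or x y hp.2.2 with hc | ⟨p₁, p₂, rfl⟩
    · obtain ⟨v, hv, hvX⟩ := hX p ⟨hp.1, hp.2.1, hc⟩ hA hB
      obtain ⟨p₁, p₂, rfl⟩ := List.append_of_mem hv
      exact ⟨v, p₁, p₂, rfl, Set.mem_insert_of_mem x hvX, List.IsChain.prefix hc ⟨p₂, by simp⟩⟩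
    · refine ⟨x, p₁, y :: p₂, rfl, Set.mem_insert x X,
        isChain_deleteEdge_append_singleton ?_ (List.IsChain.prefix hp.2.2 ⟨y :: p₂, by simp⟩)⟩
      exact fun h => (List.nodup_append.1 hp.2.1).2.2 x h x List.mem_cons_self rfl
  have hpre : p₁ ++ [v] <+: p₁ ++ v :: p₂ := ⟨p₂, by simp⟩
  obtain ⟨u, hu, huZ⟩ := hZ (p₁ ++ [v]) ⟨by simp, hp.2.1.sublist hpre.sublist, hc⟩
    (hA.of_head?_eq (by simp [List.head?_append])) ⟨v, hv, by simp⟩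
  exact ⟨u, hpre.subset hu, huZ⟩

theorem IsSeparator.of_deleteEdge_right (hX : IsSeparator (deleteEdge R x y) A B X)
    (hZ : IsSeparator (deleteEdge R x y) (insert y X) B Z) : IsSeparator R A B Z := by
  have hX' := hX.flip
  have hZ' := hZ.flip
  rw [flip_deleteEdge] at hX' hZ'
  exact (hX'.of_deleteEdge_left hZ').flip

end DeleteEdge

theorem exists_isDisjointPathFamily_of_join {R' : W → W → Prop} {C D : Set W}
    {PP QQ : Finset (List W)} (hPP : IsDisjointPathFamily R' A C PP)
    (hQQ : IsDisjointPathFamily R' D B QQ) {qf rf : List W → List W}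
    (hqf : ∀ p ∈ PP, qf p ∈ QQ) (hrf : ∀ p ∈ PP, IsPathList R (rf p))
    (hrfh : ∀ p ∈ PP, (rf p).head? = p.head?)
    (hrfl : ∀ p ∈ PP, (rf p).getLast? = (qf p).getLast?) (hrfs : ∀ p ∈ PP, rf p ⊆ p ++ qf p)
    (hcross : ∀ p ∈ PP, ∀ p' ∈ PP, ∀ u ∈ p, u ∈ qf p' → p = p') (hqinj : Set.InjOn qf PP) :
    ∃ P, IsDisjointPathFamily R A B P ∧ P.card = PP.card := by
  refine exists_isDisjointPathFamily_image (fun p hp => ⟨hrf p hp,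
    (hPP.1 p hp).2.1.of_head?_eq (hrfh p hp), (hQQ.1 _ (hqf p hp)).2.2.of_getLast?_eq (hrfl p hp)⟩)
    fun p hp p' hp' hne u hu hu' => ?_
  rcases List.mem_append.1 (hrfs p hp hu) with h | h <;>
    rcases List.mem_append.1 (hrfs p' hp' hu') with h' | h'
  · exact hPP.2 hp hp' hne u h h'
  · exact hne (hcross p hp p' hp' u h h')
  · exact hne (hcross p' hp' p hp u h' h).symm
  · exact hne (hqinj hp hp' (eq_of_pairwise_listsDisjoint hQQ.2 (hqf p hp) (hqf p' hp') h h'))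

section UpdateId

variable [DecidableEq W] {x y w : W}

theorem update_id_mem_insert (hw : w ∈ insert x X) : Function.update id x y w ∈ insert y X := by
  rcases eq_or_ne w x with rfl | h
  · simp
  · rw [Function.update_of_ne h]
    exact Set.mem_insert_of_mem y ((Set.mem_insert_iff.1 hw).resolve_left h)

theorem update_id_eq_of_mem (hy : y ∉ X) (h : Function.update id x y w ∈ X) :
    Function.update id x y w = w := by
  rcases eq_or_ne w x with rfl | hw
  · exact absurd (by simpa using h) hy
  · exact Function.update_of_ne hw _ _

theorem injOn_update_id (hy : y ∉ X) : Set.InjOn (Function.update id x y) (insert x X) := by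
  have hne : ∀ b ∈ insert x X, b ≠ x → Function.update id x y x ≠ Function.update id x y b := by
    intro b hb hbx h
    rw [Function.update_self, Function.update_of_ne hbx] at h
    exact hy (h ▸ (Set.mem_insert_iff.1 hb).resolve_left hbx)
  intro a ha b hb h
  by_cases hax : a = x <;> by_cases hbx : b = x
  · rw [hax, hbx]
  · exact absurd (hax ▸ h) (hne b hb hbx)
  · exact absurd (hbx ▸ h).symm (hne a ha hax)
  · simpa [Function.update_of_ne hax, Function.update_of_ne hbx] using h

end UpdateId

/-- The gluing step of Menger's theorem: the path of `PP` ending in `w` is continued by the path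
of `QQ` starting in `Function.update id x y w`, through `w ∈ X` or along the edge `xy`. -/
theorem exists_isDisjointPathFamily_of_deleteEdge [Finite W] {x y : W} {PP QQ : Finset (List W)}
    (hxy : R x y) (hx : x ∉ X) (hy : y ∉ X) (hX : IsSeparator (deleteEdge R x y) A B X)
    (hPP : IsDisjointPathFamily (deleteEdge R x y) A (insert x X) PP)
    (hPPc : PP.card = X.ncard + 1)
    (hQQ : IsDisjointPathFamily (deleteEdge R x y) (insert y X) B QQ)
    (hQQc : QQ.card = X.ncard + 1) :
    ∃ P, IsDisjointPathFamily R A B P ∧ P.card = X.ncard + 1 := by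
  classical
  have : Nonempty W := ⟨x⟩
  have hPPc' : (insert x X).ncard ≤ PP.card := by rw [Set.ncard_insert_of_notMem hx, hPPc]
  have hQQc' : (insert y X).ncard ≤ QQ.card := by rw [Set.ncard_insert_of_notMem hy, hQQc]
  have hPend := hPP.getLast?_eq_of_mem hPPc'
  have hQstart := hQQ.head?_eq_of_mem hQQc'
  have hcross : ∀ p ∈ PP, ∀ q ∈ QQ, ∀ u ∈ p, u ∈ q → u ∈ X := fun p hp q hq u =>
    hX.mem_of_mem_of_mem (hPP.1 p hp).1 (hPP.1 p hp).2.1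
      (fun v hv hvX => hPend p hp v hv (Set.mem_insert_of_mem x hvX)) (hQQ.1 q hq).1
      (hQQ.1 q hq).2.2 (fun v hv hvX => hQstart q hq v hv (Set.mem_insert_of_mem y hvX))
  choose! ω hωX hω using fun p (hp : p ∈ PP) =>
    ((hPP.1 p hp).2.2 : ∃ w ∈ insert x X, p.getLast? = some w)
  have hωinj : ∀ p ∈ PP, ∀ p' ∈ PP, ω p = ω p' → p = p' := fun p hp p' hp' h =>
    eq_of_pairwise_listsDisjoint hPP.2 hp hp' (List.mem_of_getLast? (hω p hp))
      (h ▸ List.mem_of_getLast? (hω p' hp'))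
  choose! qf hqf hqfh using fun p (hp : p ∈ PP) =>
    hQQ.exists_head?_eq hQQc' _ (update_id_mem_insert (hωX p hp))
  choose! rf hrf hrfh hrfl hrfs using fun p (hp : p ∈ PP) =>
    exists_isPathList_join ((hPP.1 p hp).1.mono fun _ _ h => h.1)
      ((hQQ.1 _ (hqf p hp)).1.mono fun _ _ h => h.1) (hω p hp) (hqfh p hp)
      (by rcases eq_or_ne (ω p) x with h | h <;> simp [h, hxy]) fun u hu hu' => by
        have huX := hcross p hp _ (hqf p hp) u hu hu'
        obtain rfl : ω p = u := Option.some_inj.1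
          ((hω p hp).symm.trans (hPend p hp u hu (Set.mem_insert_of_mem x huX)))
        simp [Function.update_of_ne (ne_of_mem_of_not_mem huX hx)]
  refine hPPc ▸ exists_isDisjointPathFamily_of_join hPP hQQ hqf hrf hrfh hrfl hrfs
    (fun p hp p' hp' u hu hu' => hωinj p hp p' hp' ?_) fun p hp p' hp' h =>
      hωinj p hp p' hp' (injOn_update_id hy (hωX p hp) (hωX p' hp')
        (Option.some_inj.1 ((hqfh p hp).symm.trans (h ▸ hqfh p' hp'))))
  have huX := hcross p hp _ (hqf p' hp') u hu hu'
  have h₁ := hPend p hp u hu (Set.mem_insert_of_mem x huX)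
  have h₂ := hQstart _ (hqf p' hp') u hu' (Set.mem_insert_of_mem y huX)
  rw [hω p hp, Option.some_inj] at h₁
  rw [hqfh p' hp', Option.some_inj] at h₂
  rw [h₁, ← h₂, update_id_eq_of_mem hy (h₂ ▸ huX)]

def properEdges (R : W → W → Prop) : Set (W × W) := {e | R e.1 e.2 ∧ e.1 ≠ e.2}

theorem properEdges_deleteEdge_ssubset {x y : W} (hxy : R x y) (hne : x ≠ y) :
    properEdges (deleteEdge R x y) ⊂ properEdges R :=
  ⟨fun _ he => ⟨he.1.1, he.2⟩, fun h =>
    (h (show (x, y) ∈ properEdges R from ⟨hxy, hne⟩)).1.2 ⟨rfl, rfl⟩⟩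

/-- **Menger's theorem.** Induction on the number of edges: either every separator of `R - xy`
still has `k` vertices, or one of them, `X`, is smaller, and then `insert x X` and `insert y X`
are separators of `R` of size `k` through which the gluing step applies. -/
theorem exists_isDisjointPathFamily_card_eq [Finite W] {k : ℕ}
    (hk : ∀ X, IsSeparator R A B X → k ≤ X.ncard) :
    ∃ P, IsDisjointPathFamily R A B P ∧ P.card = k := by
  induction hn : (properEdges R).ncard using Nat.strong_induction_on generalizing R A B k with
  | _ n ih =>
  rcases em (∃ x y, R x y ∧ x ≠ y) with ⟨x, y, hxy, hne⟩ | hR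
  swap
  · exact exists_isDisjointPathFamily_of_forall_eq
      (fun a b h => by_contra fun hab => hR ⟨a, b, h, hab⟩) hk
  have hlt : (properEdges (deleteEdge R x y)).ncard < n :=
    hn ▸ Set.ncard_lt_ncard (properEdges_deleteEdge_ssubset hxy hne)
  by_cases hk' : ∀ X, IsSeparator (deleteEdge R x y) A B X → k ≤ X.ncard
  · obtain ⟨P, hP, hPk⟩ := ih _ hlt hk' rfl
    exact ⟨P, hP.mono fun _ _ h => h.1, hPk⟩
  obtain ⟨X, hX, hXk⟩ : ∃ X, IsSeparator (deleteEdge R x y) A B X ∧ X.ncard < k := by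
    simpa only [not_forall, not_le, exists_prop] using hk'
  have hins : ∀ z, (z = x ∨ z = y) → z ∉ X ∧ k = X.ncard + 1 := fun z hz => by
    have := hk _ (hX.insert_of_deleteEdge hz)
    by_cases hzX : z ∈ X
    · rw [Set.insert_eq_of_mem hzX] at this
      omega
    · rw [Set.ncard_insert_of_notMem hzX] at this
      exact ⟨hzX, by omega⟩
  obtain ⟨hx, rfl⟩ := hins x (Or.inl rfl)
  obtain ⟨PP, hPP, hPPc⟩ := ih _ hlt (fun Z hZ => hk Z (hX.of_deleteEdge_left hZ)) rfl
  obtain ⟨QQ, hQQ, hQQc⟩ := ih _ hlt (fun Z hZ => hk Z (hX.of_deleteEdge_right hZ)) rfl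
  exact exists_isDisjointPathFamily_of_deleteEdge hxy hx (hins y (Or.inr rfl)).1 hX hPP hPPc
    hQQ hQQc

theorem exists_isDisjointPathFamily_isSeparator [Finite W] (R : W → W → Prop) (A B : Set W) :
    ∃ P X, IsDisjointPathFamily R A B P ∧ IsSeparator R A B X ∧ X.ncard = P.card := by
  obtain ⟨X, hX, hmin⟩ : ∃ X, IsSeparator R A B X ∧
      ∀ Y, IsSeparator R A B Y → X.ncard ≤ Y.ncard := by
    obtain ⟨X, hX, hXn⟩ := Nat.sInf_mem (s := {n | ∃ X, IsSeparator R A B X ∧ X.ncard = n})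
      ⟨_, Set.univ, isSeparator_univ, rfl⟩
    exact ⟨X, hX, fun Y hY => hXn ▸ Nat.sInf_le ⟨Y, hY, rfl⟩⟩
  obtain ⟨P, hP, hPc⟩ := exists_isDisjointPathFamily_card_eq hmin
  exact ⟨P, X, hP, hX, hPc.symm⟩

end DisjointPaths

theorem Set.ncard_eq_ncard_preimage_inl_add_ncard_preimage_inr {α β : Type*} [Finite α] [Finite β]
    (Y : Set (α ⊕ β)) : Y.ncard = (Sum.inl ⁻¹' Y).ncard + (Sum.inr ⁻¹' Y).ncard := by
  have hY : Y = Sum.inl '' (Sum.inl ⁻¹' Y) ∪ Sum.inr '' (Sum.inr ⁻¹' Y) := by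
    ext (a | b) <;> simp
  conv_lhs => rw [hY]
  rw [Set.ncard_union_eq (Set.disjoint_left.2 (by rintro _ ⟨a, -, rfl⟩ ⟨b, -, hb⟩; simp at hb)),
    Set.ncard_image_of_injective _ Sum.inl_injective,
    Set.ncard_image_of_injective _ Sum.inr_injective]

theorem Set.ncard_eq_sum_ncard_preimage_prodMk {ι β : Type*} [Fintype ι] [Finite β]
    (Y : Set (ι × β)) : Y.ncard = ∑ i, (Prod.mk i ⁻¹' Y).ncard := by
  have hY : Y = ⋃ i, Prod.mk i '' (Prod.mk i ⁻¹' Y) := by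
    ext ⟨i, b⟩
    simp
  conv_lhs => rw [hY]
  rw [Set.ncard_iUnion_of_finite (fun _ => Set.toFinite _), finsum_eq_sum_of_fintype]
  · simp only [Set.ncard_image_of_injective _ (Prod.mk_right_injective _)]
  · intro i j hij
    exact Set.disjoint_left.2 fun _ ⟨_, _, ha⟩ ⟨_, _, hb⟩ =>
      hij (congrArg Prod.fst (ha.trans hb.symm))

section TPaths

variable {V : Type*} {ℓ : ℕ} {G : Fin ℓ → V → V → Prop} {S : Fin ℓ → Set V}
  {ℬ : Finset (Finset V)}

/-- The vertices of the auxiliary digraph `tGraph`: `inl (i, u)` is `u` in the copy of `G i`,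
`inr (inl v)` the last vertex `v` of a path, shared by all the copies, and `inr (inr b)` the bag
`b`. Disjoint paths from `tSources` to `tSinks` are then exactly the T-paths. -/
abbrev TVertex (ℓ : ℕ) (V : Type*) := (Fin ℓ × V) ⊕ (V ⊕ Finset V)

def tGraph (G : Fin ℓ → V → V → Prop) (ℬ : Finset (Finset V)) :
    TVertex ℓ V → TVertex ℓ V → Prop
  | .inl (i, u), .inl (j, v) => i = j ∧ G i u v
  | .inl (_, u), .inr (.inl v) => u = v
  | .inr (.inl v), .inr (.inr b) => b ∈ ℬ ∧ v ∈ b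
  | _, _ => False

def tSources (S : Fin ℓ → Set V) : Set (TVertex ℓ V) := {z | ∃ i, ∃ u ∈ S i, z = .inl (i, u)}

def tSinks (ℬ : Finset (Finset V)) : Set (TVertex ℓ V) := {z | ∃ b ∈ ℬ, z = .inr (.inr b)}

def tLift (i : Fin ℓ) (p : List V) (v : V) (b : Finset V) : List (TVertex ℓ V) :=
  p.map (fun u => .inl (i, u)) ++ [.inr (.inl v), .inr (.inr b)]

section TLift

variable {i j : Fin ℓ} {p q : List V} {u v w : V} {b c : Finset V}

@[simp]
theorem inl_mem_tLift : (.inl (j, u) : TVertex ℓ V) ∈ tLift i p v b ↔ j = i ∧ u ∈ p := by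
  simp [tLift, and_comm, eq_comm]

@[simp]
theorem inr_inl_mem_tLift : (.inr (.inl w) : TVertex ℓ V) ∈ tLift i p v b ↔ w = v := by
  simp [tLift]

@[simp]
theorem inr_inr_mem_tLift : (.inr (.inr c) : TVertex ℓ V) ∈ tLift i p v b ↔ c = b := by
  simp [tLift]

theorem listsDisjoint_tLift_iff :
    ListsDisjoint (tLift i p v b) (tLift j q w c) ↔
      (i = j → ListsDisjoint p q) ∧ v ≠ w ∧ b ≠ c := by
  constructor
  · intro h
    refine ⟨fun hij u hu hu' => h (.inl (i, u)) (by simp [hu]) (by simp [hij, hu']),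
      fun hvw => h (.inr (.inl v)) (by simp) (by simp [hvw]),
      fun hbc => h (.inr (.inr b)) (by simp) (by simp [hbc])⟩
  · rintro ⟨hp, hv, hb⟩ (⟨k, u⟩ | u | d) hz hz'
    · simp only [inl_mem_tLift] at hz hz'
      exact hp (hz.1.symm.trans hz'.1) u hz.2 hz'.2
    · simp only [inr_inl_mem_tLift] at hz hz'
      exact hv (hz.symm.trans hz')
    · simp only [inr_inr_mem_tLift] at hz hz'
      exact hb (hz.symm.trans hz')

theorem isPathList_tLift (hp : IsPathList (G i) p) (hv : p.getLast? = some v) (hb : b ∈ ℬ)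
    (hvb : v ∈ b) : IsPathList (tGraph G ℬ) (tLift i p v b) := by
  refine ⟨by simp [tLift], ?_, ?_⟩
  · refine (hp.2.1.map fun _ _ h => by simpa using h).append (by simp) ?_
    simp
  · refine List.isChain_append.2
      ⟨(List.isChain_map _).2 (List.IsChain.imp (fun _ _ h => ⟨rfl, h⟩) hp.2.2),
        List.isChain_pair.2 ⟨hb, hvb⟩, ?_⟩
    simp [List.getLast?_map, hv, tGraph]

theorem firstIn_tLift (h : FirstIn p (S i)) :
    FirstIn (tLift i p v b) (tSources S) := by
  obtain ⟨u, hu, hpu⟩ := h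
  exact ⟨.inl (i, u), ⟨i, u, hu, rfl⟩, by simp [tLift, hpu]⟩

theorem lastIn_tLift (hb : b ∈ ℬ) : LastIn (tLift i p v b) (tSinks ℬ) :=
  ⟨.inr (.inr b), ⟨b, hb, rfl⟩, by simp [tLift]⟩

end TLift

theorem exists_eq_tLift_of_isChain {p : List (TVertex ℓ V)} {i : Fin ℓ} {u : V}
    (hc : p.IsChain (tGraph G ℬ)) (hh : p.head? = some (.inl (i, u)))
    (hl : LastIn p (tSinks ℬ)) :
    ∃ pl v b, p = tLift i pl v b ∧ pl.IsChain (G i) ∧ pl.head? = some u ∧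
      pl.getLast? = some v ∧ b ∈ ℬ ∧ v ∈ b := by
  induction p generalizing u with
  | nil => simp at hh
  | cons z t ih =>
    obtain rfl := Option.some_inj.1 hh
    obtain ⟨_, ⟨b', hb'ℬ, rfl⟩, hb'⟩ := hl
    rcases t with _ | ⟨c, t⟩
    · simp at hb'
    obtain ⟨hzc, hct⟩ := List.isChain_cons_cons.1 hc
    rw [List.getLast?_cons_cons] at hb'
    rcases c with ⟨j, w⟩ | w | d
    · obtain ⟨rfl, hG⟩ : i = j ∧ G i u w := hzc
      obtain ⟨pl, v, b, heq, hpl, hplh, hpll, hb, hvb⟩ := ih hct rfl ⟨_, ⟨b', hb'ℬ, rfl⟩, hb'⟩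
      refine ⟨u :: pl, v, b, by rw [heq]; rfl, List.isChain_cons.2 ⟨?_, hpl⟩, rfl, ?_, hb, hvb⟩
      · simpa [hplh] using hG
      · obtain ⟨rest, rfl⟩ := List.head?_eq_some_iff.1 hplh
        simpa using hpll
    · obtain rfl : u = w := hzc
      rcases t with _ | ⟨d, t⟩
      · simp at hb'
      obtain ⟨hud, hdt⟩ := List.isChain_cons_cons.1 hct
      rcases d with _ | _ | d
      · exact hud.elim
      · exact hud.elim
      rcases t with _ | ⟨e, t⟩
      · exact ⟨[u], u, d, rfl, List.isChain_singleton u, rfl, rfl, hud⟩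
      · rcases e with _ | _ | e <;> exact (List.isChain_cons_cons.1 hdt).1.elim
    · exact hzc.elim

theorem IsPathList.exists_eq_tLift {p : List (TVertex ℓ V)} (hp : IsPathList (tGraph G ℬ) p)
    (hA : FirstIn p (tSources S)) (hB : LastIn p (tSinks ℬ)) :
    ∃ i pl v b, p = tLift i pl v b ∧ IsPathList (G i) pl ∧ FirstIn pl (S i) ∧
      pl.getLast? = some v ∧ b ∈ ℬ ∧ v ∈ b := by
  obtain ⟨_, ⟨i, u, hu, rfl⟩, hh⟩ := hA
  obtain ⟨pl, v, b, rfl, hc, hplh, hpll, hb, hvb⟩ := exists_eq_tLift_of_isChain hp.2.2 hh hB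
  refine ⟨i, pl, v, b, rfl, ⟨?_, (List.nodup_append.1 hp.2.1).1.of_map _, hc⟩, ⟨u, hu, hplh⟩,
    hpll, hb, hvb⟩
  rintro rfl
  simp at hplh

theorem TPathSys.exists_isDisjointPathFamily {P : Finset (Fin ℓ × List V)}
    (hP : TPathSys G S ℬ P) :
    ∃ P', IsDisjointPathFamily (tGraph G ℬ) (tSources S) (tSinks ℬ) P' ∧ P'.card = P.card := by
  obtain ⟨⟨hpath, hdisj⟩, hlast, φ, hφ, hφℬ⟩ := hP
  rcases P.eq_empty_or_nonempty with rfl | ⟨q₀, hq₀⟩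
  · exact ⟨∅, ⟨by simp, by simp⟩, rfl⟩
  have : Nonempty V := ⟨(hφℬ q₀ hq₀).2.choose⟩
  choose! ω hω hωφ using fun q (hq : q ∈ P) => (hφℬ q hq).2
  refine exists_isDisjointPathFamily_image (f := fun q => tLift q.1 q.2 (ω q) (φ q))
    (fun q hq => ⟨isPathList_tLift (hpath q hq).1 (hω q hq) (hφℬ q hq).1 (hωφ q hq),
      firstIn_tLift (hpath q hq).2,
      lastIn_tLift (hφℬ q hq).1⟩) fun q hq q' hq' hne => listsDisjoint_tLift_iff.2
    ⟨hdisj q hq q' hq' hne, fun h => hlast q hq q' hq' hne (by rw [hω q hq, hω q' hq', h]),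
      fun h => hne (hφ hq hq' h)⟩

theorem exists_tPathSys_image {ι : Type*} [Nonempty ι] {I : Finset ι}
    (F : ι → Fin ℓ × List V) (ω : ι → V) (β : ι → Finset V)
    (hF : ∀ i ∈ I, IsPathList (G (F i).1) (F i).2 ∧ FirstIn (F i).2 (S (F i).1) ∧
      (F i).2.getLast? = some (ω i) ∧ β i ∈ ℬ ∧ ω i ∈ β i)
    (hd : ∀ i ∈ I, ∀ j ∈ I, i ≠ j →
      ((F i).1 = (F j).1 → ListsDisjoint (F i).2 (F j).2) ∧ ω i ≠ ω j ∧ β i ≠ β j) :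
    ∃ P, TPathSys G S ℬ P ∧ P.card = I.card := by
  classical
  have hinj : Set.InjOn F I := fun i hi j hj h => by_contra fun hne => by
    obtain ⟨u, hu⟩ := List.exists_mem_of_ne_nil _ (hF i hi).1.1
    exact (hd i hi j hj hne).1 (congrArg Prod.fst h) u hu (h ▸ hu)
  have hinv : ∀ i ∈ I, Function.invFunOn F I (F i) = i := fun i hi => hinj.leftInvOn_invFunOn hi
  have hne : ∀ i ∈ I, ∀ j ∈ I, F i ≠ F j → i ≠ j := fun _ _ _ _ h h' => h (h' ▸ rfl)
  refine ⟨I.image F, ⟨⟨Finset.forall_mem_image.2 fun i hi => ⟨(hF i hi).1, (hF i hi).2.1⟩, ?_⟩,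
    ?_, β ∘ Function.invFunOn F I, ?_, Finset.forall_mem_image.2 fun i hi => ?_⟩,
    Finset.card_image_of_injOn hinj⟩
  · simp only [Finset.forall_mem_image]
    exact fun i hi j hj h => (hd i hi j hj (hne i hi j hj h)).1
  · simp only [Finset.forall_mem_image]
    intro i hi j hj h
    rw [(hF i hi).2.2.1, (hF j hj).2.2.1, Ne, Option.some_inj]
    exact (hd i hi j hj (hne i hi j hj h)).2.1
  · rw [Finset.coe_image]
    rintro _ ⟨i, hi, rfl⟩ _ ⟨j, hj, rfl⟩ h
    simp only [Function.comp, hinv i hi, hinv j hj] at h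
    by_contra h'
    exact (hd i hi j hj (hne i hi j hj h')).2.2 h
  · simp only [Function.comp, hinv i hi]
    exact ⟨(hF i hi).2.2.2.1, ω i, (hF i hi).2.2.1, (hF i hi).2.2.2.2⟩

theorem IsDisjointPathFamily.exists_tPathSys {P' : Finset (List (TVertex ℓ V))}
    (hP' : IsDisjointPathFamily (tGraph G ℬ) (tSources S) (tSinks ℬ) P') :
    ∃ P, TPathSys G S ℬ P ∧ P.card = P'.card := by
  have hlift := fun p (hp : p ∈ P') =>
    (hP'.1 p hp).1.exists_eq_tLift (hP'.1 p hp).2.1 (hP'.1 p hp).2.2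
  rcases P'.eq_empty_or_nonempty with rfl | ⟨p₀, hp₀⟩
  · exact ⟨∅, ⟨⟨by simp, by simp⟩, by simp, fun _ => ∅, by simp, by simp⟩, rfl⟩
  obtain ⟨i₀, -, v₀, -⟩ := hlift p₀ hp₀
  have : Nonempty (Fin ℓ) := ⟨i₀⟩
  have : Nonempty V := ⟨v₀⟩
  choose! ι pl ω β hp hpl hfirst hlast hβ hωβ using hlift
  exact exists_tPathSys_image (fun p => (ι p, pl p)) ω β
    (fun p hp' => ⟨hpl p hp', hfirst p hp', hlast p hp', hβ p hp', hωβ p hp'⟩)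
    fun p hp' p' hp'' hne => listsDisjoint_tLift_iff.1 (by
      rw [← hp p hp', ← hp p' hp'']
      exact hP'.2 hp' hp'' hne)

section Cuts

variable [DecidableEq V]

def IsTCut (G : Fin ℓ → V → V → Prop) (S : Fin ℓ → Set V) (ℬ ℬ' : Finset (Finset V))
    (X₀ : Set V) (X : Fin ℓ → Set V) : Prop :=
  ℬ' ⊆ ℬ ∧ X₀ ⊆ ↑(ℬ'.biUnion id) ∧
    ∀ i, IsSeparator (G i) (S i) ((↑(ℬ'.biUnion id) : Set V) \ X₀) (X i)

noncomputable def tCutOrder (ℬ ℬ' : Finset (Finset V)) (X₀ : Set V) (X : Fin ℓ → Set V) : ℕ :=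
  (ℬ \ ℬ').card + X₀.ncard + ∑ i, (X i).ncard

def tCutSet (ℬ ℬ' : Finset (Finset V)) (X₀ : Set V) (X : Fin ℓ → Set V) : Set (TVertex ℓ V)
  | .inl (i, u) => u ∈ X i
  | .inr (.inl v) => v ∈ X₀
  | .inr (.inr b) => b ∈ ℬ \ ℬ'

variable {ℬ' : Finset (Finset V)} {X₀ : Set V} {X : Fin ℓ → Set V}

theorem ncard_tCutSet [Finite V] : (tCutSet ℬ ℬ' X₀ X).ncard = tCutOrder ℬ ℬ' X₀ X := by
  rw [Set.ncard_eq_ncard_preimage_inl_add_ncard_preimage_inr,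
    Set.ncard_eq_sum_ncard_preimage_prodMk,
    Set.ncard_eq_ncard_preimage_inl_add_ncard_preimage_inr (Sum.inr ⁻¹' _)]
  change ∑ i, (X i).ncard + (X₀.ncard + (↑(ℬ \ ℬ') : Set (Finset V)).ncard) = _
  rw [Set.ncard_coe_finset, tCutOrder]
  ring

theorem IsTCut.isSeparator_tCutSet (h : IsTCut G S ℬ ℬ' X₀ X) :
    IsSeparator (tGraph G ℬ) (tSources S) (tSinks ℬ) (tCutSet ℬ ℬ' X₀ X) := by
  intro p hp hA hB
  obtain ⟨i, pl, v, b, rfl, hpl, hfirst, hlast, hb, hvb⟩ := hp.exists_eq_tLift hA hB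
  by_cases hbℬ' : b ∈ ℬ'
  swap
  · exact ⟨.inr (.inr b), by simp, Finset.mem_sdiff.2 ⟨hb, hbℬ'⟩⟩
  by_cases hvX₀ : v ∈ X₀
  · exact ⟨.inr (.inl v), by simp, hvX₀⟩
  obtain ⟨u, hu, huX⟩ := h.2.2 i pl hpl hfirst
    ⟨v, ⟨by simpa using ⟨b, hbℬ', hvb⟩, hvX₀⟩, hlast⟩
  exact ⟨.inl (i, u), by simp [hu], huX⟩

theorem IsSeparator.exists_isTCut [Finite V] {Y : Set (TVertex ℓ V)}
    (hY : IsSeparator (tGraph G ℬ) (tSources S) (tSinks ℬ) Y) :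
    ∃ ℬ' X₀ X, IsTCut G S ℬ ℬ' X₀ X ∧ tCutOrder ℬ ℬ' X₀ X ≤ Y.ncard := by
  classical
  set ℬ' := ℬ.filter fun b => .inr (.inr b) ∉ Y
  set X₀ : Set V := {v | .inr (.inl v) ∈ Y} ∩ ↑(ℬ'.biUnion id)
  refine ⟨ℬ', X₀, fun i => {u | .inl (i, u) ∈ Y},
    ⟨Finset.filter_subset _ _, Set.inter_subset_right, fun i p hp hA hB => ?_⟩, ?_⟩
  · obtain ⟨v, ⟨hv, hvX₀⟩, hpv⟩ := hB
    obtain ⟨b, hbℬ', hvb⟩ : ∃ b ∈ ℬ', v ∈ b := by simpa using hv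
    obtain ⟨hb, hbY⟩ := Finset.mem_filter.1 hbℬ'
    obtain ⟨z, hz, hzY⟩ :=
      hY _ (isPathList_tLift hp hpv hb hvb) (firstIn_tLift hA) (lastIn_tLift hb)
    rcases z with ⟨j, u⟩ | w | c
    · obtain ⟨rfl, hu⟩ := inl_mem_tLift.1 hz
      exact ⟨u, hu, hzY⟩
    · obtain rfl := inr_inl_mem_tLift.1 hz
      exact absurd ⟨hzY, hv⟩ hvX₀
    · obtain rfl := inr_inr_mem_tLift.1 hz
      exact absurd hzY hbY
  · rw [← ncard_tCutSet]
    refine Set.ncard_le_ncard fun z hz => ?_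
    rcases z with ⟨i, u⟩ | v | b
    · exact hz
    · exact hz.1
    · obtain ⟨hb, hbℬ'⟩ := Finset.mem_sdiff.1 hz
      by_contra h
      exact hbℬ' (Finset.mem_filter.2 ⟨hb, h⟩)

theorem TPathSys.card_le_tCutOrder [Finite V] {P : Finset (Fin ℓ × List V)}
    (hP : TPathSys G S ℬ P) (hcut : IsTCut G S ℬ ℬ' X₀ X) : P.card ≤ tCutOrder ℬ ℬ' X₀ X := by
  obtain ⟨P', hP', hcard⟩ := hP.exists_isDisjointPathFamily
  rw [← hcard, ← ncard_tCutSet]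
  exact hP'.card_le_ncard hcut.isSeparator_tCutSet

end Cuts

end TPaths

theorem csSup_eq_csInf_of_forall_le {α : Type*} [ConditionallyCompleteLattice α] {M N : Set α}
    {a b : α} (h : ∀ m ∈ M, ∀ n ∈ N, m ≤ n) (ha : a ∈ M) (hb : b ∈ N) (hba : b ≤ a) :
    sSup M = sInf N := by
  rw [IsGreatest.csSup_eq ⟨ha, fun m hm => (h m hm b hb).trans hba⟩,
    IsLeast.csInf_eq ⟨hb, fun n hn => hba.trans (h a ha n hn)⟩]
  exact le_antisymm (h a ha b hb) hba

theorem tpaths_min_max {V : Type*} [Fintype V] [DecidableEq V] {ℓ : ℕ}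
    (G : Fin ℓ → V → V → Prop) (S : Fin ℓ → Set V) (ℬ : Finset (Finset V)) :
    sSup {n : ℕ | ∃ P : Finset (Fin ℓ × List V), TPathSys G S ℬ P ∧ P.card = n} =
    sInf {n : ℕ | ∃ ℬ' ⊆ ℬ, ∃ X₀ : Set V, X₀ ⊆ ↑(ℬ'.biUnion id) ∧
      ∃ X : Fin ℓ → Set V,
        (∀ i, IsSeparator (G i) (S i) ((↑(ℬ'.biUnion id) : Set V) \ X₀) (X i)) ∧
        n = (ℬ \ ℬ').card + X₀.ncard + ∑ i : Fin ℓ, (X i).ncard} := by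
  obtain ⟨P', Y, hP', hY, hYP'⟩ :=
    exists_isDisjointPathFamily_isSeparator (tGraph G ℬ) (tSources S) (tSinks ℬ)
  obtain ⟨P, hP, hPP'⟩ := hP'.exists_tPathSys
  obtain ⟨ℬ', X₀, X, hcut, hle⟩ := hY.exists_isTCut
  refine csSup_eq_csInf_of_forall_le ?_ ⟨P, hP, rfl⟩ ⟨ℬ', hcut.1, X₀, hcut.2.1, X, hcut.2.2, rfl⟩
    (hPP' ▸ hYP' ▸ hle)
  rintro _ ⟨Q, hQ, rfl⟩ _ ⟨ℬ'', h₁, X₀', h₂, X', h₃, rfl⟩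
  exact hQ.card_le_tCutOrder ⟨h₁, h₂, h₃⟩
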